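/- arXiv:2110.03328 — 2 statements merged into one kernel-verified Lean document; each statement's English description precedes it below -/
import Mathlib

section
/- For every positive integer k there exist integers q_1 < q_2 < ... < q_k with q_i ≥ 2 and integers p_1, ..., p_k with p_i ≥ 3 such that the values 3·(p_i·(3q_i − 1)² − 6q_i(q_i − 1)) are equal for all i = 1, ..., k, while the values 9·(q_i − 1)·(3p_i q_i − p_i − 4q_i) are pairwise distinct. -/
private def mp : ℕ → ℤ × ℤ
  | 0 => (5, 25)
  | n+1 => ((mp n).1 + 3 * (mp n).2, (mp n).2 * ((mp n).1 + 3 * (mp n).2) ^ 2)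

private def mm (n : ℕ) : ℤ := (mp n).1
private def PP (n : ℕ) : ℤ := (mp n).2

private lemma mm_succ (n : ℕ) : mm (n+1) = mm n + 3 * PP n := rfl
private lemma PP_succ (n : ℕ) : PP (n+1) = PP n * (mm (n+1)) ^ 2 := rfl

private lemma mm_base (n : ℕ) :
    5 ≤ mm n ∧ 0 < PP n ∧ (∃ a, mm n = 3*a+2) ∧ (∃ b, PP n = 3*b+1) := by
  induction n with
  | zero =>
    exact ⟨by norm_num [mm, mp], by norm_num [PP, mp], ⟨1, by norm_num [mm, mp]⟩,
      ⟨8, by norm_num [PP, mp]⟩⟩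
  | succ n ih =>
    obtain ⟨h5, hP, ⟨a, ha⟩, ⟨b, hb⟩⟩ := ih
    have h5' : 5 ≤ mm (n+1) := by rw [mm_succ]; linarith
    have ha' : mm (n+1) = 3*(a + PP n) + 2 := by rw [mm_succ, ha]; ring
    refine ⟨h5', ?_, ⟨a + PP n, ha'⟩, ?_⟩
    · rw [PP_succ]; exact mul_pos hP (pow_pos (by linarith) 2)
    · have ha'' : mm (n+1) = 3*(a + 3*b+1) + 2 := by rw [ha', hb]; ring
      exact ⟨9*(a+3*b+1)^2*b + 12*(a+3*b+1)*b + 4*b + 3*(a+3*b+1)^2 + 4*(a+3*b+1) + 1,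
        by rw [PP_succ, hb, ha'']; ring⟩

private lemma sq_dvd_PP (j n : ℕ) (h : j ≤ n) : mm j ^ 2 ∣ PP n := by
  induction n with
  | zero =>
    interval_cases j
    norm_num [mm, PP, mp]
  | succ n ih =>
    rcases Nat.lt_succ_iff_lt_or_eq.mp (Nat.lt_succ_of_le h) with h' | h'
    · rw [PP_succ]; exact (ih (Nat.lt_succ_iff.mp h')).mul_right _
    · subst h'; rw [PP_succ]; exact dvd_mul_left _ _

private lemma sq_dvd_sub (j i : ℕ) (h : j ≤ i) : mm j ^ 2 ∣ mm i - mm j := by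
  induction i, h using Nat.le_induction with
  | base => simp
  | succ n hn ih =>
    have e : mm (n+1) - mm j = (mm n - mm j) + 3 * PP n := by rw [mm_succ]; ring
    rw [e]; exact dvd_add ih ((sq_dvd_PP j n hn).mul_left 3)

private lemma mm_mono : StrictMono mm :=
  strictMono_nat_of_lt_succ fun n => by
    have := (mm_base n).2.1; rw [mm_succ]; linarith

private lemma dvd_three (M P m a b c : ℤ) (hM : M = 3*a+2) (hP : P = 3*b+1) (hm : m = 3*c+2) :
    (3:ℤ) ∣ 2*M + (3*(P + M^2)+1)*P + 2*m^2 - 2*m := by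
  subst hM hP hm
  exact ⟨2*a + (3*b+1)^2 + (3*a+2)^2*(3*b+1) + b + 6*c^2 + 6*c + 3, by ring⟩

private lemma key_ineq (x y A : ℤ) (hx : 5 ≤ x) (hxy : x < y) (hA : 3*y^4 ≤ A) :
    0 < x*(y-2)*(A - 2*y^2 - 6*y) - y*(x-2)*(A - 2*x^2 - 6*x) := by
  nlinarith [mul_pos (by linarith : (0:ℤ) < x) (by linarith : (0:ℤ) < y),
    mul_le_mul_of_nonneg_right (by linarith : x ≤ y) (pow_nonneg (by linarith : (0:ℤ) ≤ y) 3),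
    sq_nonneg (x*y), sq_nonneg (x-y), mul_pos (mul_pos (by linarith : (0:ℤ) < x) (by linarith : (0:ℤ) < y)) (by linarith : (0:ℤ) < y)]

/-- For every positive integer `k` there exist integers `q₁ < ... < q_k` with `qᵢ ≥ 2`
and integers `pᵢ ≥ 3` such that the values `3(pᵢ(3qᵢ-1)² - 6qᵢ(qᵢ-1))` all agree, while the
values `9(qᵢ-1)(3pᵢqᵢ - pᵢ - 4qᵢ)` are pairwise distinct. -/
theorem stmt_0 (k : ℕ) (hk : 0 < k) :
    ∃ q p : Fin k → ℤ, StrictMono q ∧ (∀ i, 2 ≤ q i) ∧ (∀ i, 3 ≤ p i) ∧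
      (∀ i j, 3 * (p i * (3 * q i - 1) ^ 2 - 6 * q i * (q i - 1)) =
              3 * (p j * (3 * q j - 1) ^ 2 - 6 * q j * (q j - 1))) ∧
      (∀ i j, i ≠ j →
        9 * (q i - 1) * (3 * p i * q i - p i - 4 * q i) ≠
        9 * (q j - 1) * (3 * p j * q j - p j - 4 * q j)) := by
  have hKle : ∀ i : Fin k, (i : ℕ) ≤ k - 1 := fun i => Nat.le_pred_of_lt i.isLt
  obtain ⟨hM5, hPpos, ⟨aM, haM⟩, ⟨bP, hbP⟩⟩ := mm_base (k - 1)
  set A : ℤ := 2 * mm (k-1) + (3*(PP (k-1) + (mm (k-1))^2) + 1) * PP (k-1) with hAdef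
  have hm5 : ∀ i : Fin k, 5 ≤ mm ↑i := fun i => (mm_base ↑i).1
  have hq : ∀ i : Fin k, 3 * ((mm ↑i + 1) / 3) = mm ↑i + 1 := by
    intro i
    obtain ⟨a, ha⟩ := (mm_base ↑i).2.2.1
    have e : mm ↑i + 1 = 3 * (a + 1) := by rw [ha]; ring
    rw [e, Int.mul_ediv_cancel_left _ (by norm_num)]
  have hPge : ∀ i : Fin k, (mm ↑i)^2 ≤ PP (k-1) :=
    fun i => Int.le_of_dvd hPpos (sq_dvd_PP ↑i (k-1) (hKle i))
  have hA3 : ∀ i : Fin k, 3 * (mm ↑i)^4 ≤ A := by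
    intro i
    have h1 := hPge i
    have h5 := hm5 i
    have hPm : (mm ↑i)^2 * (mm ↑i)^2 ≤ PP (k-1) * PP (k-1) :=
      mul_le_mul h1 h1 (by positivity) (by linarith)
    rw [hAdef]
    nlinarith [sq_nonneg (mm (k-1)), hM5, hPpos, mul_pos hPpos hPpos]
  have hp : ∀ i : Fin k,
      3 * (mm ↑i)^2 * ((A + 2*(mm ↑i)^2 - 2*(mm ↑i)) / (3*(mm ↑i)^2))
        = A + 2*(mm ↑i)^2 - 2*(mm ↑i) := by
    intro i
    obtain ⟨a, ha⟩ := (mm_base ↑i).2.2.1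
    have hco : IsCoprime (3:ℤ) ((mm ↑i)^2) := ⟨-(3*a^2+4*a+1), 1, by rw [ha]; ring⟩
    have h3 : (3:ℤ) ∣ A + 2*(mm ↑i)^2 - 2*(mm ↑i) := by
      have := dvd_three (mm (k-1)) (PP (k-1)) (mm ↑i) aM bP a haM hbP ha
      have e : A + 2*(mm ↑i)^2 - 2*(mm ↑i)
          = 2*(mm (k-1)) + (3*(PP (k-1) + (mm (k-1))^2)+1)*(PP (k-1)) + 2*(mm ↑i)^2 - 2*(mm ↑i) := by
        rw [hAdef]
      rw [e]; exact this
    have hsq : (mm ↑i)^2 ∣ A + 2*(mm ↑i)^2 - 2*(mm ↑i) := by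
      have e : A + 2*(mm ↑i)^2 - 2*(mm ↑i)
          = 2*(mm (k-1) - mm ↑i) + (3*(PP (k-1) + (mm (k-1))^2)+1)*(PP (k-1)) + 2*(mm ↑i)^2 := by
        rw [hAdef]; ring
      rw [e]
      exact dvd_add (dvd_add ((sq_dvd_sub ↑i (k-1) (hKle i)).mul_left 2)
        ((sq_dvd_PP ↑i (k-1) (hKle i)).mul_left _)) (dvd_mul_left _ _)
    exact Int.mul_ediv_cancel' (hco.mul_dvd h3 hsq)
  refine ⟨fun i => (mm ↑i + 1) / 3,
    fun i => (A + 2*(mm ↑i)^2 - 2*(mm ↑i)) / (3*(mm ↑i)^2), ?_, ?_, ?_, ?_, ?_⟩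
  · intro i j hij
    have h := mm_mono (show (i : ℕ) < (j : ℕ) from hij)
    have h1 := hq i; have h2 := hq j
    simp only
    linarith
  · intro i
    have h1 := hq i; have h2 := hm5 i
    simp only
    linarith
  · intro i
    have h1 := hp i; have h2 := hA3 i; have h5 := hm5 i
    simp only
    have hpos : (0:ℤ) < 3*(mm ↑i)^2 := by positivity
    have hle : 3*(mm ↑i)^2 * 3 ≤ 3*(mm ↑i)^2 * ((A + 2*(mm ↑i)^2 - 2*(mm ↑i)) / (3*(mm ↑i)^2)) := by
      rw [h1]
      have h25 : (25:ℤ) ≤ (mm ↑i)^2 := by nlinarith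
      nlinarith [mul_le_mul_of_nonneg_right h25 (sq_nonneg (mm ↑i))]
    exact le_of_mul_le_mul_left hle hpos
  · have hc : ∀ i : Fin k,
        3 * (((A + 2*(mm ↑i)^2 - 2*(mm ↑i)) / (3*(mm ↑i)^2)) * (3 * ((mm ↑i + 1) / 3) - 1) ^ 2
          - 6 * ((mm ↑i + 1) / 3) * ((mm ↑i + 1) / 3 - 1)) = A + 4 := by
      intro i
      have h1 := hp i
      have h2 := hq i
      set Q := (mm ↑i + 1) / 3 with hQ
      set Pl := (A + 2*(mm ↑i)^2 - 2*(mm ↑i)) / (3*(mm ↑i)^2) with hPl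
      have hm : mm ↑i = 3 * Q - 1 := by linarith
      rw [hm] at h1
      linear_combination h1
    intro i j
    simp only
    rw [hc i, hc j]
  · have hV : ∀ i : Fin k,
        mm ↑i * (9 * ((mm ↑i + 1) / 3 - 1) *
          (3 * ((A + 2*(mm ↑i)^2 - 2*(mm ↑i)) / (3*(mm ↑i)^2)) * ((mm ↑i + 1) / 3)
            - (A + 2*(mm ↑i)^2 - 2*(mm ↑i)) / (3*(mm ↑i)^2) - 4 * ((mm ↑i + 1) / 3)))
          = (mm ↑i - 2) * (A - 2*(mm ↑i)^2 - 6*(mm ↑i)) := by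
      intro i
      have h1 := hp i
      have h2 := hq i
      set Q := (mm ↑i + 1) / 3 with hQ
      set Pl := (A + 2*(mm ↑i)^2 - 2*(mm ↑i)) / (3*(mm ↑i)^2) with hPl
      have hm : mm ↑i = 3 * Q - 1 := by linarith
      rw [hm] at h1 ⊢
      linear_combination (3 * Q - 3) * h1
    have hlt : ∀ i j : Fin k, i < j →
        9 * ((mm ↑i + 1) / 3 - 1) *
          (3 * ((A + 2*(mm ↑i)^2 - 2*(mm ↑i)) / (3*(mm ↑i)^2)) * ((mm ↑i + 1) / 3)
            - (A + 2*(mm ↑i)^2 - 2*(mm ↑i)) / (3*(mm ↑i)^2) - 4 * ((mm ↑i + 1) / 3))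
        < 9 * ((mm ↑j + 1) / 3 - 1) *
          (3 * ((A + 2*(mm ↑j)^2 - 2*(mm ↑j)) / (3*(mm ↑j)^2)) * ((mm ↑j + 1) / 3)
            - (A + 2*(mm ↑j)^2 - 2*(mm ↑j)) / (3*(mm ↑j)^2) - 4 * ((mm ↑j + 1) / 3)) := by
      intro i j hij
      have hmlt := mm_mono (show (i : ℕ) < (j : ℕ) from hij)
      have k1 := key_ineq (mm ↑i) (mm ↑j) A (hm5 i) hmlt (hA3 j)
      have e : ((9 * ((mm ↑j + 1) / 3 - 1) *
          (3 * ((A + 2*(mm ↑j)^2 - 2*(mm ↑j)) / (3*(mm ↑j)^2)) * ((mm ↑j + 1) / 3)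
            - (A + 2*(mm ↑j)^2 - 2*(mm ↑j)) / (3*(mm ↑j)^2) - 4 * ((mm ↑j + 1) / 3)))
          - (9 * ((mm ↑i + 1) / 3 - 1) *
          (3 * ((A + 2*(mm ↑i)^2 - 2*(mm ↑i)) / (3*(mm ↑i)^2)) * ((mm ↑i + 1) / 3)
            - (A + 2*(mm ↑i)^2 - 2*(mm ↑i)) / (3*(mm ↑i)^2) - 4 * ((mm ↑i + 1) / 3)))) * (mm ↑i * mm ↑j)
          = mm ↑i * (mm ↑j - 2) * (A - 2*(mm ↑j)^2 - 6*(mm ↑j))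
            - mm ↑j * (mm ↑i - 2) * (A - 2*(mm ↑i)^2 - 6*(mm ↑i)) := by
        linear_combination (mm ↑i) * hV j - (mm ↑j) * hV i
      rw [← e] at k1
      rcases mul_pos_iff.mp k1 with ⟨h1, _⟩ | ⟨_, h2⟩
      · linarith
      · have : (0:ℤ) < mm ↑i * mm ↑j :=
          mul_pos (by linarith [hm5 i]) (by linarith [hm5 j])
        linarith
    intro i j hne
    simp only
    rcases lt_or_gt_of_ne hne with h | h
    · exact ne_of_lt (hlt i j h)
    · exact (ne_of_lt (hlt j i h)).symm
end

section
/- For a tuple (d_1, ..., d_r) of positive integers, define χ(d_1, ..., d_r) = (Π d_i) · (coefficient of X³ in the formal power series (1 + X)^{4+r} · Π_{i=1}^{r} (1 + d_i X)^{−1} over ℚ). Then: χ(70,16,16,14,7,6) = χ(56,49,8,6,5,4,4) = −7767425433600; χ(88,28,19,14,6,6) = χ(76,56,11,7,6,6,2) = −35445749391360; and χ(84,29,25,25,18,7) = χ(60,58,49,9,5,5,5) = −384536710530000. -/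
/-!
Since `(1 + dX)⁻¹ = Σ (-d)ⁿ Xⁿ`, the coefficient of `Xʲ` in `Π (1 + dᵢX)⁻¹` is the complete
homogeneous symmetric polynomial `hⱼ(-d₁, ..., -d_r)`. Hence `χ(d) = (Π dᵢ) · Σᵢ C(4+r, i) h₃₋ᵢ(-d)`,
a finite expression that `norm_num` evaluates.
-/

/-- For a tuple `(d₁, ..., d_r)` of positive integers, the Euler number
`χ(d₁, ..., d_r) = (Π dᵢ) · [X³] ((1 + X)^(4+r) · Π (1 + dᵢX)⁻¹)` computed in `ℚ⟦X⟧`. -/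
noncomputable def chiCI (l : List ℤ) : ℚ :=
  (l.map (fun d => (d : ℚ))).prod *
    PowerSeries.coeff (R := ℚ) 3
      ((1 + PowerSeries.X) ^ (4 + l.length) *
        (l.map (fun d => (1 + PowerSeries.C (R := ℚ) (d : ℚ) * PowerSeries.X)⁻¹)).prod)

open Finset

/-- The complete homogeneous symmetric polynomial `hⱼ` evaluated at the entries of `l`. -/
def List.hsymm {R : Type*} [CommSemiring R] : List R → ℕ → R
  | _, 0 => 1
  | [], _ + 1 => 0
  | a :: l, j + 1 => hsymm l (j + 1) + a * hsymm (a :: l) j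

namespace PowerSeries

variable {R : Type*}

theorem coeff_one_add_X_pow [Semiring R] (n k : ℕ) :
    coeff k ((1 + X : R⟦X⟧) ^ n) = n.choose k := by
  rw [← Polynomial.coe_X, ← Polynomial.coe_one, ← Polynomial.coe_add, ← Polynomial.coe_pow,
    Polynomial.coeff_coe, Polynomial.coeff_one_add_X_pow]

theorem mk_pow_eq_one_add_C_mul_X_mul [CommSemiring R] (a : R) :
    (mk fun n => a ^ n) = 1 + C a * X * mk fun n => a ^ n := by
  ext (_ | n) <;> simp [mul_assoc, coeff_succ_X_mul, pow_succ']

theorem inv_one_add_C_mul_X {K : Type*} [Field K] (a : K) :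
    (1 + C a * X)⁻¹ = mk fun n => (-a) ^ n := by
  rw [inv_eq_iff_mul_eq_one (by simp)]
  have h := mk_pow_eq_one_add_C_mul_X_mul (-a)
  rw [map_neg] at h
  linear_combination h

theorem coeff_prod_mk_pow [CommSemiring R] (l : List R) (j : ℕ) :
    coeff j (l.map fun a => mk fun n => a ^ n).prod = l.hsymm j := by
  induction l generalizing j with
  | nil => cases j <;> simp [List.hsymm, coeff_one]
  | cons a l ih =>
    induction j with
    | zero => simpa [List.hsymm] using ih 0
    | succ j ihj =>
      simp only [List.map_cons, List.prod_cons] at ihj ⊢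
      rw [mk_pow_eq_one_add_C_mul_X_mul, add_mul, one_mul, mul_assoc, mul_assoc, map_add,
        coeff_C_mul, coeff_succ_X_mul, ihj, ih, List.hsymm]

end PowerSeries

open PowerSeries in
theorem chiCI_eq_prod_mul_sum_choose_mul_hsymm (l : List ℤ) :
    chiCI l = (l.map (fun d => (d : ℚ))).prod *
      ∑ i ∈ range 4, ((4 + l.length).choose i : ℚ) * (l.map fun d => -(d : ℚ)).hsymm (3 - i) := by
  rw [chiCI, coeff_mul, Finset.Nat.sum_antidiagonal_eq_sum_range_succ_mk]
  simp only [inv_one_add_C_mul_X, coeff_one_add_X_pow, ← coeff_prod_mk_pow, List.map_map]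
  rfl

/-- The Euler numbers of the three Wang–Du pairs of complete intersection threefolds
agree within each pair. -/
theorem stmt_11 :
    chiCI [70, 16, 16, 14, 7, 6] = -7767425433600 ∧
    chiCI [56, 49, 8, 6, 5, 4, 4] = -7767425433600 ∧
    chiCI [88, 28, 19, 14, 6, 6] = -35445749391360 ∧
    chiCI [76, 56, 11, 7, 6, 6, 2] = -35445749391360 ∧
    chiCI [84, 29, 25, 25, 18, 7] = -384536710530000 ∧
    chiCI [60, 58, 49, 9, 5, 5, 5] = -384536710530000 := by
  simp only [chiCI_eq_prod_mul_sum_choose_mul_hsymm, sum_range_succ, sum_range_zero]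
  norm_num [Nat.choose, List.hsymm]
end
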